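/- arXiv:2008.06646 — 2 statements merged into one kernel-verified Lean document; each statement's English description precedes it below -/
import Mathlib

section
/- For vectors x, y in R^n and r ≥ 1, one has (|x|^{r-1} x − |y|^{r-1} y) · (x − y) ≥ (1/2) |x|^{r-1} |x − y|^2 + (1/2) |y|^{r-1} |x − y|^2. -/
open scoped RealInnerProductSpace

/-- Pointwise strong monotonicity inequality for the damping nonlinearity `C(u) = |u|^{r-1}u`:
for `x, y ∈ ℝⁿ` and `r ≥ 1`,
`(|x|^{r-1} x − |y|^{r-1} y) · (x − y) ≥ ½|x|^{r-1}|x−y|² + ½|y|^{r-1}|x−y|²`. -/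
theorem stmt_1 (n : ℕ) (x y : EuclideanSpace ℝ (Fin n)) (r : ℝ) (hr : 1 ≤ r) :
    (1 / 2) * ‖x‖ ^ (r - 1) * ‖x - y‖ ^ 2 + (1 / 2) * ‖y‖ ^ (r - 1) * ‖x - y‖ ^ 2 ≤
      ⟪(‖x‖ ^ (r - 1)) • x - (‖y‖ ^ (r - 1)) • y, x - y⟫ := by
  set a : ℝ := ‖x‖ ^ (r - 1) with ha
  set b : ℝ := ‖y‖ ^ (r - 1) with hb
  have ha0 : 0 ≤ a := Real.rpow_nonneg (norm_nonneg x) _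
  have hb0 : 0 ≤ b := Real.rpow_nonneg (norm_nonneg y) _
  have hkey : 0 ≤ (a - b) * (‖x‖ ^ 2 - ‖y‖ ^ 2) := by
    rcases le_total ‖x‖ ‖y‖ with h | h
    · have h1 : a ≤ b := Real.rpow_le_rpow (norm_nonneg x) h (by linarith)
      have h2 : ‖x‖ ^ 2 ≤ ‖y‖ ^ 2 := by
        apply pow_le_pow_left₀ (norm_nonneg x) h
      nlinarith
    · have h1 : b ≤ a := Real.rpow_le_rpow (norm_nonneg y) h (by linarith)
      have h2 : ‖y‖ ^ 2 ≤ ‖x‖ ^ 2 := by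
        apply pow_le_pow_left₀ (norm_nonneg y) h
      exact mul_nonneg (by linarith) (by linarith)
  have hnorm : ‖x - y‖ ^ 2 = ‖x‖ ^ 2 - 2 * ⟪x, y⟫ + ‖y‖ ^ 2 := by
    rw [@norm_sub_sq_real]
  have hinner : ⟪a • x - b • y, x - y⟫ =
      a * ‖x‖ ^ 2 - (a + b) * ⟪x, y⟫ + b * ‖y‖ ^ 2 := by
    rw [inner_sub_left, inner_sub_right, inner_sub_right, real_inner_smul_left,
      real_inner_smul_left, real_inner_smul_left, real_inner_smul_left,
      real_inner_self_eq_norm_sq, real_inner_self_eq_norm_sq, real_inner_comm y x]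
    ring
  rw [hinner, hnorm]
  nlinarith [hkey]
end

section
/- For vectors x, y in R^n and r ≥ 1, the pointwise combination of the two previous facts gives (|x|^{r-1} x − |y|^{r-1} y) · (x − y) ≥ 2^{-(r-1)} |x − y|^{r+1}. -/
open scoped RealInnerProductSpace

lemma real_rpow_add_le_mul_rpow_add_rpow (a b : ℝ) (ha : 0 ≤ a) (hb : 0 ≤ b) {p : ℝ}
    (hp : 1 ≤ p) : (a + b) ^ p ≤ (2 : ℝ) ^ (p - 1) * (a ^ p + b ^ p) := by
  have h := NNReal.rpow_add_le_mul_rpow_add_rpow a.toNNReal b.toNNReal hp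
  have := NNReal.coe_le_coe.2 h
  push_cast at this
  rwa [Real.coe_toNNReal _ ha, Real.coe_toNNReal _ hb] at this

/-- For vectors `x, y ∈ ℝⁿ` and `r ≥ 2`:
`(|x|^{r-1} x − |y|^{r-1} y) · (x − y) ≥ 2^{-(r-1)} |x − y|^{r+1}`. -/
theorem stmt_3 (n : ℕ) (x y : EuclideanSpace ℝ (Fin n)) (r : ℝ) (hr : 2 ≤ r) :
    (2 : ℝ) ^ (-(r - 1)) * ‖x - y‖ ^ (r + 1) ≤
      ⟪(‖x‖ ^ (r - 1)) • x - (‖y‖ ^ (r - 1)) • y, x - y⟫ := by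
  set a := ‖x‖ with ha
  set b := ‖y‖ with hb
  set c := ‖x - y‖ with hc
  have ha0 : 0 ≤ a := norm_nonneg _
  have hb0 : 0 ≤ b := norm_nonneg _
  have hc0 : 0 ≤ c := norm_nonneg _
  have hr1 : (1 : ℝ) ≤ r - 1 := by linarith
  -- expand the inner product
  have hexp : ⟪(a ^ (r - 1)) • x - (b ^ (r - 1)) • y, x - y⟫
      = a ^ (r - 1) * a ^ 2 + b ^ (r - 1) * b ^ 2
        - (a ^ (r - 1) + b ^ (r - 1)) * ⟪x, y⟫ := by
    rw [inner_sub_left, inner_sub_right, inner_sub_right, real_inner_smul_left,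
      real_inner_smul_left, real_inner_smul_left, real_inner_smul_left,
      real_inner_self_eq_norm_sq, real_inner_self_eq_norm_sq, real_inner_comm y x]
    ring
  -- c² = a² + b² - 2⟪x,y⟫
  have hcsq : c ^ 2 = a ^ 2 - 2 * ⟪x, y⟫ + b ^ 2 := by
    rw [hc, ha, hb, @norm_sub_sq_real]
  -- Step B: inner ≥ ½ (a^{r-1} + b^{r-1}) c²
  have hB : (a ^ (r - 1) + b ^ (r - 1)) * c ^ 2 / 2
      ≤ ⟪(a ^ (r - 1)) • x - (b ^ (r - 1)) • y, x - y⟫ := by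
    rw [hexp, hcsq]
    have key : 0 ≤ (a ^ (r - 1) - b ^ (r - 1)) * (a ^ 2 - b ^ 2) := by
      rcases le_total a b with h | h
      · have h1 : a ^ (r - 1) ≤ b ^ (r - 1) := Real.rpow_le_rpow ha0 h (by linarith)
        have h2 : a ^ 2 ≤ b ^ 2 := by nlinarith
        nlinarith
      · have h1 : b ^ (r - 1) ≤ a ^ (r - 1) := Real.rpow_le_rpow hb0 h (by linarith)
        have h2 : b ^ 2 ≤ a ^ 2 := by nlinarith
        nlinarith
    nlinarith
  -- Step A: c^{r-1} ≤ 2^{r-2} (a^{r-1} + b^{r-1})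
  have hA : c ^ (r - 1) ≤ (2 : ℝ) ^ (r - 2) * (a ^ (r - 1) + b ^ (r - 1)) := by
    have hcab : c ≤ a + b := norm_sub_le x y
    calc c ^ (r - 1) ≤ (a + b) ^ (r - 1) := Real.rpow_le_rpow hc0 hcab (by linarith)
      _ ≤ (2 : ℝ) ^ (r - 1 - 1) * (a ^ (r - 1) + b ^ (r - 1)) :=
          real_rpow_add_le_mul_rpow_add_rpow a b ha0 hb0 hr1
      _ = (2 : ℝ) ^ (r - 2) * (a ^ (r - 1) + b ^ (r - 1)) := by
          rw [show r - 1 - 1 = r - 2 by ring]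
  -- combine
  have h2pos : (0 : ℝ) < (2 : ℝ) ^ (r - 2) := Real.rpow_pos_of_pos two_pos _
  have hSnn : 0 ≤ a ^ (r - 1) + b ^ (r - 1) := by positivity
  have hfin : (2 : ℝ) ^ (-(r - 1)) * c ^ (r + 1)
      ≤ (a ^ (r - 1) + b ^ (r - 1)) * c ^ 2 / 2 := by
    have hsplit : c ^ (r + 1) = c ^ (r - 1) * c ^ 2 := by
      rw [show c ^ (2 : ℕ) = c ^ ((2 : ℕ) : ℝ) by rw [Real.rpow_natCast],
        ← Real.rpow_add' hc0 (by push_cast; intro h; linarith)]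
      congr 1
      push_cast
      ring
    rw [hsplit]
    have hc2 : 0 ≤ c ^ 2 := sq_nonneg c
    have h1 : (2 : ℝ) ^ (-(r - 1)) * (c ^ (r - 1) * c ^ 2)
        ≤ (2 : ℝ) ^ (-(r - 1)) * (((2 : ℝ) ^ (r - 2) * (a ^ (r - 1) + b ^ (r - 1))) * c ^ 2) := by
      have h2 : (0 : ℝ) < (2 : ℝ) ^ (-(r - 1)) := Real.rpow_pos_of_pos two_pos _
      apply mul_le_mul_of_nonneg_left _ h2.le
      exact mul_le_mul_of_nonneg_right hA hc2
    refine h1.trans_eq ?_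
    rw [← mul_assoc, ← mul_assoc, ← Real.rpow_add two_pos]
    have : -(r - 1) + (r - 2) = -1 := by ring
    rw [this]
    rw [Real.rpow_neg_one]
    ring
  exact hfin.trans hB
end
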